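/- arXiv:1703.09594 — 2 statements merged into one kernel-verified Lean document; each statement's English description precedes it below -/
import Mathlib

section
/- Let ω ≥ 1 be a natural number, N = 2ω + 1, I = {k ∈ ℤ | −ω ≤ k ≤ ω} with wrap-around addition ⊕ (and corresponding subtraction ⊖), and let n ≥ 1. Let V be the free complex vector space with basis (b_k) indexed by k ∈ Iⁿ, and define the linear comultiplication Δ : V → V ⊗ V on basis vectors by Δ(b_k) = Σ_{h ∈ Iⁿ} b_h ⊗ b_{k ⊖ h}, where ⊖ acts componentwise. For x ∈ ℝⁿ define δ_x = Σ_{k ∈ Iⁿ} exp(2πi·(k·x)) · b_k, where k·x = Σ_j k_j x_j. Then Δ(δ_x) = δ_x ⊗ δ_x if and only if N·x_j is an integer for every coordinate j. -/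
open scoped TensorProduct

/-- Wrap-around addition modulo `2ω+1` represented on the integer interval
`{-ω, …, ω}`. -/
def wrapAddZ (ω : ℕ) (k h : ℤ) : ℤ :=
  if -(ω : ℤ) ≤ k + h ∧ k + h ≤ (ω : ℤ) then k + h
  else if (ω : ℤ) < k + h then k + h - (2 * (ω : ℤ) + 1)
  else k + h + (2 * (ω : ℤ) + 1)

/-- The finite set `Iⁿ` of lattice points with all coordinates in `{-ω, …, ω}`. -/
noncomputable def wrapGrid (ω n : ℕ) : Finset (Fin n → ℤ) :=
  Fintype.piFinset fun _ => Finset.Icc (-(ω : ℤ)) (ω : ℤ)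

/-- The position eigenstate `δ_x = Σ_{k ∈ Iⁿ} exp(2πi·(k·x)) · b_k` in the free
complex vector space with basis `(b_k)` indexed by `Fin n → ℤ`. -/
noncomputable def deltaState (ω n : ℕ) (x : Fin n → ℝ) : (Fin n → ℤ) →₀ ℂ :=
  ∑ k ∈ wrapGrid ω n,
    Complex.exp (2 * (Real.pi : ℂ) * Complex.I * (∑ j, (k j : ℂ) * (x j : ℂ))) •
      Finsupp.single k 1

lemma mem_wrapGrid_iff {ω n : ℕ} {k : Fin n → ℤ} :
    k ∈ wrapGrid ω n ↔ ∀ j, -(ω : ℤ) ≤ k j ∧ k j ≤ (ω : ℤ) := by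
  simp [wrapGrid, Fintype.mem_piFinset, Finset.mem_Icc]

lemma wrapAddZ_bound {ω : ℕ} {a b : ℤ} (ha : -(ω:ℤ) ≤ a ∧ a ≤ ω) (hb : -(ω:ℤ) ≤ b ∧ b ≤ ω) :
    -(ω:ℤ) ≤ wrapAddZ ω a b ∧ wrapAddZ ω a b ≤ ω := by
  unfold wrapAddZ; split_ifs <;> omega

lemma wrapAddZ_cancel₁ {ω : ℕ} {a b : ℤ} (ha : -(ω:ℤ) ≤ a ∧ a ≤ ω) (hb : -(ω:ℤ) ≤ b ∧ b ≤ ω) :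
    wrapAddZ ω (wrapAddZ ω a b) (-b) = a := by
  unfold wrapAddZ; split_ifs <;> omega

lemma wrapAddZ_cancel₂ {ω : ℕ} {a b : ℤ} (ha : -(ω:ℤ) ≤ a ∧ a ≤ ω) (hb : -(ω:ℤ) ≤ b ∧ b ≤ ω) :
    wrapAddZ ω (wrapAddZ ω a (-b)) b = a := by
  unfold wrapAddZ; split_ifs <;> omega

lemma zpow_wrapAddZ {ω : ℕ} {u : ℂ} (hu : u ≠ 0) (hN : u ^ (2*(ω:ℤ)+1) = 1) (a b : ℤ) :
    u ^ wrapAddZ ω a b = u ^ a * u ^ b := by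
  unfold wrapAddZ
  split_ifs with h1 h2
  · exact zpow_add₀ hu a b
  · rw [zpow_sub₀ hu, hN, div_one, zpow_add₀ hu]
  · rw [zpow_add₀ hu (a+b), hN, mul_one, zpow_add₀ hu]

lemma sum_single_eq_iff {α : Type*} [DecidableEq α] (s : Finset α) (f g : α → ℂ) :
    (∑ a ∈ s, Finsupp.single a (f a)) = (∑ a ∈ s, Finsupp.single a (g a)) ↔
      ∀ a ∈ s, f a = g a := by
  constructor
  · intro h a ha
    have h2 := DFunLike.congr_fun h a
    simpa [Finsupp.finset_sum_apply, Finsupp.single_apply, Finset.sum_ite_eq' s a, ha] using h2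
  · intro h
    exact Finset.sum_congr rfl fun a ha => by rw [h a ha]


/-- Let `Δ` be the linear comultiplication on the free complex vector space with basis
indexed by `Iⁿ`, `Δ(b_k) = Σ_{h ∈ Iⁿ} b_h ⊗ b_{k ⊖ h}` (wrap-around subtraction
componentwise). Then `Δ(δ_x) = δ_x ⊗ δ_x` iff `(2ω+1)·x_j` is an integer for every
coordinate `j`. -/
theorem deltaState_copied_iff (ω n : ℕ) (hω : 1 ≤ ω) (hn : 1 ≤ n)
    (Δ : ((Fin n → ℤ) →₀ ℂ) →ₗ[ℂ] ((Fin n → ℤ) →₀ ℂ) ⊗[ℂ] ((Fin n → ℤ) →₀ ℂ))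
    (hΔ : ∀ k ∈ wrapGrid ω n,
      Δ (Finsupp.single k 1) =
        ∑ h ∈ wrapGrid ω n,
          (Finsupp.single h (1 : ℂ)) ⊗ₜ[ℂ]
            (Finsupp.single (fun i => wrapAddZ ω (k i) (-(h i))) (1 : ℂ)))
    (x : Fin n → ℝ) :
    Δ (deltaState ω n x) = deltaState ω n x ⊗ₜ[ℂ] deltaState ω n x
      ↔ ∀ j : Fin n, ∃ m : ℤ, ((2 * ω + 1 : ℕ) : ℝ) * x j = (m : ℝ) := by
  classical
  set G := wrapGrid ω n with hG
  set u : Fin n → ℂ := fun j => Complex.exp (2 * (Real.pi : ℂ) * Complex.I * (x j : ℂ)) with hu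
  have hune : ∀ j, u j ≠ 0 := fun j => Complex.exp_ne_zero _
  set E : (Fin n → ℤ) → ℂ := fun k =>
    Complex.exp (2 * (Real.pi : ℂ) * Complex.I * (∑ j, (k j : ℂ) * (x j : ℂ))) with hE
  have hEprod : ∀ k : Fin n → ℤ, E k = ∏ j, u j ^ (k j) := by
    intro k
    rw [hE]
    simp only
    rw [Finset.mul_sum, Complex.exp_sum]
    refine Finset.prod_congr rfl fun j _ => ?_
    rw [hu]
    simp only
    rw [← Complex.exp_int_mul]
    congr 1
    ring
  set ψ := (finsuppTensorFinsupp' ℂ (Fin n → ℤ) (Fin n → ℤ)).toLinearMap with hψ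
  have hψinj : Function.Injective ψ := (finsuppTensorFinsupp' ℂ (Fin n → ℤ) (Fin n → ℤ)).injective
  have hψsingle : ∀ (a b : Fin n → ℤ) (r s : ℂ),
      ψ (Finsupp.single a r ⊗ₜ[ℂ] Finsupp.single b s) = Finsupp.single (a, b) (r * s) :=
    fun a b r s => finsuppTensorFinsupp'_single_tmul_single ℂ _ _ a b r s
  -- left side
  have hL : ψ (Δ (deltaState ω n x)) =
      ∑ p ∈ G ×ˢ G, Finsupp.single p (E (fun i => wrapAddZ ω (p.2 i) (p.1 i))) := by
    rw [Finset.sum_product]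
    rw [deltaState]
    simp only [map_sum]
    have step1 : ∀ k ∈ G, ψ (Δ (E k • Finsupp.single k 1)) =
        ∑ h ∈ G, Finsupp.single (h, fun i => wrapAddZ ω (k i) (-(h i))) (E k) := by
      intro k hk
      rw [map_smul Δ, hΔ k hk]
      simp only [map_smul, map_sum]
      rw [Finset.smul_sum]
      refine Finset.sum_congr rfl fun h hh => ?_
      rw [hψsingle, mul_one, Finsupp.smul_single', mul_one]
    rw [Finset.sum_congr rfl step1, Finset.sum_comm]
    refine Finset.sum_congr rfl fun h hh => ?_
    have hhb := mem_wrapGrid_iff.mp hh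
    refine Finset.sum_bij' (fun k _ => fun i => wrapAddZ ω (k i) (-(h i)))
      (fun m _ => fun i => wrapAddZ ω (m i) (h i)) ?_ ?_ ?_ ?_ ?_
    · intro k hk
      rw [mem_wrapGrid_iff] at hk ⊢
      intro j
      exact wrapAddZ_bound (hk j) ⟨by have := hhb j; omega, by have := hhb j; omega⟩
    · intro m hm
      rw [mem_wrapGrid_iff] at hm ⊢
      intro j
      exact wrapAddZ_bound (hm j) (hhb j)
    · intro k hk
      rw [mem_wrapGrid_iff] at hk
      funext i
      exact wrapAddZ_cancel₂ (hk i) (hhb i)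
    · intro m hm
      rw [mem_wrapGrid_iff] at hm
      funext i
      exact wrapAddZ_cancel₁ (hm i) (hhb i)
    · intro k hk
      rw [mem_wrapGrid_iff] at hk
      congr 2
      funext i
      exact (wrapAddZ_cancel₂ (hk i) (hhb i)).symm
  -- right side
  have hR : ψ (deltaState ω n x ⊗ₜ[ℂ] deltaState ω n x) =
      ∑ p ∈ G ×ˢ G, Finsupp.single p (E p.1 * E p.2) := by
    rw [Finset.sum_product]
    rw [deltaState, TensorProduct.sum_tmul]
    simp only [map_sum]
    refine Finset.sum_congr rfl fun h hh => ?_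
    rw [TensorProduct.tmul_sum]
    simp only [map_sum]
    refine Finset.sum_congr rfl fun m hm => ?_
    rw [← TensorProduct.smul_tmul', TensorProduct.tmul_smul]
    simp only [map_smul]
    rw [hψsingle, mul_one, Finsupp.smul_single', Finsupp.smul_single', mul_one]
  -- reduction to coefficient condition
  have key : (Δ (deltaState ω n x) = deltaState ω n x ⊗ₜ[ℂ] deltaState ω n x) ↔
      ∀ p ∈ G ×ˢ G, E (fun i => wrapAddZ ω (p.2 i) (p.1 i)) = E p.1 * E p.2 := by
    rw [← hψinj.eq_iff, hL, hR, sum_single_eq_iff]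
  rw [key]
  -- now prove coefficient condition ↔ integrality
  have hNiff : ∀ j : Fin n, (u j ^ (2*(ω:ℤ)+1) = 1 ↔ ∃ m : ℤ, ((2 * ω + 1 : ℕ) : ℝ) * x j = (m : ℝ)) := by
    intro j
    have harg : u j ^ (2*(ω:ℤ)+1) =
        Complex.exp ((2*(ω:ℤ)+1 : ℤ) * (2 * (Real.pi : ℂ) * Complex.I * (x j : ℂ))) := by
      rw [Complex.exp_int_mul]
    rw [harg, Complex.exp_eq_one_iff]
    constructor
    · rintro ⟨m, hm⟩
      refine ⟨m, ?_⟩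
      have h2 : (2 * (Real.pi : ℂ) * Complex.I) ≠ 0 := by
        simp [Real.pi_ne_zero, Complex.I_ne_zero, Complex.ofReal_ne_zero]
      have h3 : ((2*(ω:ℤ)+1 : ℤ) : ℂ) * (x j : ℂ) * (2 * (Real.pi : ℂ) * Complex.I)
          = (m : ℂ) * (2 * (Real.pi : ℂ) * Complex.I) := by
        rw [← hm]; ring
      have h4 := mul_right_cancel₀ h2 h3
      have h5 : ((((2 * ω + 1 : ℕ) : ℝ) * x j : ℝ) : ℂ) = ((m : ℝ) : ℂ) := by
        push_cast at h4 ⊢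
        linear_combination h4
      exact_mod_cast h5
    · rintro ⟨m, hm⟩
      refine ⟨m, ?_⟩
      have h5 : ((2*(ω:ℤ)+1 : ℤ) : ℂ) * (x j : ℂ) = (m : ℂ) := by
        have := congrArg (Complex.ofReal) hm
        push_cast at this ⊢
        linear_combination this
      linear_combination (2 * (Real.pi : ℂ) * Complex.I) * h5
  constructor
  · -- copied → integral
    intro hC j
    rw [← hNiff j]
    have hkjG : (fun i => if i = j then (ω:ℤ) else 0) ∈ G := by
      rw [mem_wrapGrid_iff]
      intro i
      split_ifs <;> omega
    have hc := hC ((fun i => if i = j then (ω:ℤ) else 0), (fun i => if i = j then (ω:ℤ) else 0))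
      (Finset.mem_product.mpr ⟨hkjG, hkjG⟩)
    simp only at hc
    have hw : (fun i => wrapAddZ ω (if i = j then (ω:ℤ) else 0) (if i = j then (ω:ℤ) else 0))
        = fun i => if i = j then (-1:ℤ) else 0 := by
      funext i
      split_ifs with hij
      · unfold wrapAddZ; split_ifs <;> omega
      · unfold wrapAddZ; split_ifs <;> omega
    rw [hw] at hc
    simp only [hEprod] at hc
    have hprodite : ∀ v : ℤ, (∏ i, u i ^ (if i = j then v else 0)) = u j ^ v := by
      intro v
      rw [Finset.prod_eq_single_of_mem j (Finset.mem_univ j)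
        (fun b _ hb => by simp [hb])]
      simp
    simp only [hprodite] at hc
    have hne := hune j
    have hsplit : (2*(ω:ℤ)+1) = (ω:ℤ) + (ω:ℤ) + 1 := by ring
    rw [hsplit, zpow_add₀ hne, zpow_add₀ hne, ← hc, ← zpow_add₀ hne]
    norm_num
  · -- integral → copied
    intro hI p hp
    rw [Finset.mem_product] at hp
    have hN : ∀ j, u j ^ (2*(ω:ℤ)+1) = 1 := fun j => (hNiff j).mpr (hI j)
    rw [hEprod, hEprod, hEprod, ← Finset.prod_mul_distrib]
    refine Finset.prod_congr rfl fun i _ => ?_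
    rw [zpow_wrapAddZ (hune i) (hN i)]
    ring
end

section
/- Let τ be a natural number and let a, a⁺ be the truncated ladder operators on ℂ^{τ+1} (a e_0 = 0, a e_n = √n · e_{n−1} for 1 ≤ n ≤ τ; a⁺ e_n = √(n+1) · e_{n+1} for n < τ, a⁺ e_τ = 0). Then the commutator satisfies [a, a⁺] = a ∘ a⁺ − a⁺ ∘ a = id − (τ+1) · P_τ, where P_τ is the orthogonal projection onto the span of e_τ (the rank-one operator |e_τ⟩⟨e_τ|). -/
/-- The truncated ladder operators on `ℂ^{τ+1}` satisfy the canonical commutation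
relation with truncation correction: `[a, a⁺] = id − (τ+1)·|e_τ⟩⟨e_τ|`. -/
theorem truncated_CCR (τ : ℕ)
    (a adag : EuclideanSpace ℂ (Fin (τ + 1)) →ₗ[ℂ] EuclideanSpace ℂ (Fin (τ + 1)))
    (ha0 : a (EuclideanSpace.single (⟨0, Nat.succ_pos τ⟩ : Fin (τ + 1)) 1) = 0)
    (ha : ∀ (n : ℕ) (h1 : 1 ≤ n) (h2 : n ≤ τ),
      a (EuclideanSpace.single (⟨n, by omega⟩ : Fin (τ + 1)) 1) =
        ((Real.sqrt n : ℝ) : ℂ) •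
          EuclideanSpace.single (⟨n - 1, by omega⟩ : Fin (τ + 1)) 1)
    (hadag : ∀ (n : ℕ) (h : n < τ),
      adag (EuclideanSpace.single (⟨n, by omega⟩ : Fin (τ + 1)) 1) =
        ((Real.sqrt (n + 1) : ℝ) : ℂ) •
          EuclideanSpace.single (⟨n + 1, by omega⟩ : Fin (τ + 1)) 1)
    (hadagτ : adag (EuclideanSpace.single (⟨τ, Nat.lt_succ_self τ⟩ : Fin (τ + 1)) 1) = 0)
    (P : EuclideanSpace ℂ (Fin (τ + 1)) →ₗ[ℂ] EuclideanSpace ℂ (Fin (τ + 1)))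
    (hP : ∀ v : EuclideanSpace ℂ (Fin (τ + 1)),
      P v = (inner ℂ (EuclideanSpace.single (⟨τ, Nat.lt_succ_self τ⟩ : Fin (τ + 1)) (1 : ℂ)) v : ℂ) •
        EuclideanSpace.single (⟨τ, Nat.lt_succ_self τ⟩ : Fin (τ + 1)) (1 : ℂ)) :
    a ∘ₗ adag - adag ∘ₗ a = LinearMap.id - ((τ : ℂ) + 1) • P := by
  apply (EuclideanSpace.basisFun (Fin (τ+1)) ℂ).toBasis.ext
  intro i
  rw [OrthonormalBasis.coe_toBasis, EuclideanSpace.basisFun_apply]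
  obtain ⟨n, hn⟩ := i
  have hsq : ∀ m : ℕ, ((Real.sqrt m : ℝ) : ℂ) * ((Real.sqrt m : ℝ) : ℂ) = (m : ℂ) := by
    intro m
    rw [← Complex.ofReal_mul, Real.mul_self_sqrt (Nat.cast_nonneg m)]
    norm_num
  have hsq' : ∀ m : ℕ, ((Real.sqrt ((m:ℝ) + 1) : ℝ) : ℂ) * ((Real.sqrt ((m:ℝ) + 1) : ℝ) : ℂ)
      = (m : ℂ) + 1 := by
    intro m
    rw [← Complex.ofReal_mul, Real.mul_self_sqrt (by positivity)]
    push_cast; ring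
  have hPs : ∀ (m : ℕ) (hm : m < τ + 1),
      P (EuclideanSpace.single (⟨m, hm⟩ : Fin (τ+1)) 1) =
        if m = τ then EuclideanSpace.single (⟨τ, Nat.lt_succ_self τ⟩ : Fin (τ+1)) (1:ℂ) else 0 := by
    intro m hm
    rw [hP, EuclideanSpace.inner_single_left, EuclideanSpace.single_apply]
    by_cases h : m = τ
    · simp [h, Fin.ext_iff]
    · have : (⟨m, hm⟩ : Fin (τ+1)) ≠ ⟨τ, Nat.lt_succ_self τ⟩ := by
        simp [Fin.ext_iff, h]
      simp [this.symm, h]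
  simp only [LinearMap.sub_apply, LinearMap.comp_apply, LinearMap.id_apply,
    LinearMap.smul_apply]
  rcases Nat.lt_or_ge n τ with hlt | hge
  · -- n < τ
    rw [hPs n hn, if_neg (by omega)]
    rw [hadag n hlt, map_smul]
    rcases Nat.eq_zero_or_pos n with h0 | hpos
    · subst h0
      rw [ha0, ha 1 le_rfl hlt]
      simp only [smul_smul, map_zero, smul_zero]
      have : ((Real.sqrt ((0:ℕ) + 1) : ℝ) : ℂ) * ((Real.sqrt ((1:ℕ)) : ℝ) : ℂ) = 1 := by
        norm_num
      rw [this, one_smul]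
    · rw [ha n hpos (le_of_lt hlt)]
      rw [ha (n+1) (by omega) hlt, map_smul]
      have hadag' := hadag (n-1) (by omega : n - 1 < τ)
      have hnn : n - 1 + 1 = n := by omega
      have hc : ((n - 1 : ℕ) : ℝ) + 1 = (n : ℝ) := by
        exact_mod_cast congrArg (Nat.cast : ℕ → ℝ) hnn
      rw [hc] at hadag'
      simp only [hnn] at hadag'
      rw [hadag']
      simp only [Nat.add_sub_cancel, smul_smul, smul_zero, sub_zero]
      rw [show ((Real.sqrt ((n:ℝ) + 1) : ℝ) : ℂ) * ((Real.sqrt (((n:ℕ)+1:ℕ):ℝ) : ℝ) : ℂ)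
            = (n : ℂ) + 1 by push_cast; exact hsq' n]
      rw [show ((Real.sqrt ((n:ℕ):ℝ) : ℝ) : ℂ) * ((Real.sqrt ((n:ℝ)) : ℝ) : ℂ)
            = (n : ℂ) by exact hsq n]
      module
  · -- n = τ
    have hnτ : n = τ := by omega
    subst hnτ
    rw [hPs n hn, if_pos rfl]
    have he : (⟨n, hn⟩ : Fin (n+1)) = ⟨n, Nat.lt_succ_self n⟩ := rfl
    rw [he, hadagτ, map_zero]
    rcases Nat.eq_zero_or_pos n with h0 | hpos
    · subst h0
      rw [ha0, map_zero]
      simp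
    · rw [ha n hpos le_rfl, map_smul]
      have hadag' := hadag (n-1) (by omega : n - 1 < n)
      have hnn : n - 1 + 1 = n := by omega
      have hc : ((n - 1 : ℕ) : ℝ) + 1 = (n : ℝ) := by
        exact_mod_cast congrArg (Nat.cast : ℕ → ℝ) hnn
      rw [hc] at hadag'
      simp only [hnn] at hadag'
      rw [hadag', smul_smul]
      rw [show ((Real.sqrt ((n:ℕ):ℝ) : ℝ) : ℂ) * ((Real.sqrt ((n:ℝ)) : ℝ) : ℂ)
            = (n : ℂ) by exact hsq n]
      module
end
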